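/- arXiv:1608.06797 — 3 statements merged into one kernel-verified Lean document; each statement's English description precedes it below -/
import Mathlib

section
/- Let c be a minimum fractional additive stabilizer for a finite simple graph G=(V,E) with unit edge weights, and let M be a matching of maximum (1+c)-weight in G. Then c_e = 0 for every edge e ∈ E \ M, and 0 ≤ c_e ≤ 1 for every edge e ∈ M. -/
open Finset
open scoped Classical

noncomputable section

namespace Stab

variable {V : Type*}

/-- A matching of `G`: a finite set of edges of `G` that are pairwise vertex-disjoint. -/
def IsMatching (G : SimpleGraph V) (M : Finset (Sym2 V)) : Prop :=
  (∀ e ∈ M, e ∈ G.edgeSet) ∧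
    ∀ e ∈ M, ∀ f ∈ M, e ≠ f → ∀ v : V, v ∈ e → v ∉ f

/-- `v` is exposed by `M` (no edge of `M` contains it). -/
def Exposed (M : Finset (Sym2 V)) (v : V) : Prop := ∀ e ∈ M, v ∉ e

/-- total `w`-weight of a finite set of edges -/
def weight (w : Sym2 V → ℝ) (M : Finset (Sym2 V)) : ℝ := ∑ e ∈ M, w e

/-- the edge set of `G`, as a finset -/
def edgeFin [Fintype V] [DecidableEq V] (G : SimpleGraph V) : Finset (Sym2 V) :=
  Finset.univ.filter fun e => e ∈ G.edgeSet

/-- the edges of `G` having both endpoints in `S` -/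
def edgesIn [Fintype V] [DecidableEq V] (G : SimpleGraph V) (S : Set V) : Finset (Sym2 V) :=
  Finset.univ.filter fun e => e ∈ G.edgeSet ∧ ∀ v ∈ e, v ∈ S

/-- `ν(G,w)`: the maximum total `w`-weight of a matching of `G` -/
def nuW (G : SimpleGraph V) (w : Sym2 V → ℝ) : ℝ :=
  sSup {x | ∃ M, IsMatching G M ∧ x = weight w M}

/-- `y` is a fractional `w`-vertex cover of `G` -/
def IsFracCover (G : SimpleGraph V) (w : Sym2 V → ℝ) (y : V → ℝ) : Prop :=
  (∀ v, 0 ≤ y v) ∧ ∀ u v : V, G.Adj u v → w s(u, v) ≤ y u + y v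

/-- `τ_f(G,w)`: the minimum value of a fractional `w`-vertex cover of `G` -/
def tauW [Fintype V] (G : SimpleGraph V) (w : Sym2 V → ℝ) : ℝ :=
  sInf {x | ∃ y, IsFracCover G w y ∧ x = ∑ v, y v}

/-- the weighted graph `(G,w)` is stable -/
def IsStable [Fintype V] (G : SimpleGraph V) (w : Sym2 V → ℝ) : Prop :=
  nuW G w = tauW G w

/-- `c` is a fractional additive stabilizer for the unit-weight graph `G` -/
def IsStabilizer [Fintype V] [DecidableEq V] (G : SimpleGraph V) (c : Sym2 V → ℝ) : Prop :=
  (∀ e ∈ edgeFin G, 0 ≤ c e) ∧ IsStable G fun e => 1 + c e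

/-- the cost `∑_{e ∈ E} c_e` of `c` -/
def cost [Fintype V] [DecidableEq V] (G : SimpleGraph V) (c : Sym2 V → ℝ) : ℝ :=
  ∑ e ∈ edgeFin G, c e

/-- `c` is a minimum fractional additive stabilizer of `G` -/
def IsMinStabilizer [Fintype V] [DecidableEq V] (G : SimpleGraph V) (c : Sym2 V → ℝ) : Prop :=
  IsStabilizer G c ∧ ∀ c', IsStabilizer G c' → cost G c ≤ cost G c'

/-- `OPT`: the minimum cost of a fractional additive stabilizer of `G` -/
def optCost [Fintype V] [DecidableEq V] (G : SimpleGraph V) : ℝ :=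
  sInf {x | ∃ c, IsStabilizer G c ∧ x = cost G c}

/-- `ν(G)`: the maximum cardinality of a matching of `G` -/
def nu (G : SimpleGraph V) : ℕ :=
  sSup {n | ∃ M, IsMatching G M ∧ M.card = n}

/-- `M` is a maximum-cardinality matching of `G` -/
def IsMaxMatching (G : SimpleGraph V) (M : Finset (Sym2 V)) : Prop :=
  IsMatching G M ∧ ∀ M', IsMatching G M' → M'.card ≤ M.card

/-- `M` is a matching of maximum `w`-weight in `G` -/
def IsMaxWeightMatching (G : SimpleGraph V) (w : Sym2 V → ℝ) (M : Finset (Sym2 V)) : Prop :=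
  IsMatching G M ∧ ∀ M', IsMatching G M' → weight w M' ≤ weight w M

/-- a feasible solution `(M,y,c)` of MFASP on `G` -/
def FeasSol [Fintype V] [DecidableEq V] (G : SimpleGraph V)
    (M : Finset (Sym2 V)) (y : V → ℝ) (c : Sym2 V → ℝ) : Prop :=
  IsMatching G M ∧ (∀ e ∈ edgeFin G, 0 ≤ c e) ∧
    IsFracCover G (fun e => 1 + c e) y ∧
    (∑ e ∈ M, (1 + c e)) = ∑ v, y v

/-- an optimal solution of MFASP on `G` -/
def OptSol [Fintype V] [DecidableEq V] (G : SimpleGraph V)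
    (M : Finset (Sym2 V)) (y : V → ℝ) (c : Sym2 V → ℝ) : Prop :=
  FeasSol G M y c ∧ IsMinStabilizer G c

/-- `v` is inessential: some maximum-cardinality matching exposes `v` -/
def Inessential (G : SimpleGraph V) (v : V) : Prop :=
  ∃ M, IsMaxMatching G M ∧ Exposed M v

/-- the set `X` of the Gallai–Edmonds decomposition -/
def geX (G : SimpleGraph V) : Set V := {v | Inessential G v}

/-- the Tutte set `Y = N(X) \ X` of the Gallai–Edmonds decomposition -/
def geY (G : SimpleGraph V) : Set V := {v | v ∉ geX G ∧ ∃ u ∈ geX G, G.Adj u v}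

/-- the set `Z = V \ (X ∪ Y)` of the Gallai–Edmonds decomposition -/
def geZ (G : SimpleGraph V) : Set V := {v | v ∉ geX G ∧ v ∉ geY G}

/-- `K` is a connected component of the subgraph of `G` induced on `X`. -/
def IsCompOf (G : SimpleGraph V) (X : Set V) (K : Set V) : Prop :=
  K ⊆ X ∧ (G.induce K).Connected ∧ ∀ u ∈ K, ∀ v ∈ X, G.Adj u v → v ∈ K

/-- properties (a)–(d) of a feasible MFASP solution `(M,y,c)` -/
def PropsABCD [Fintype V] [DecidableEq V] (G : SimpleGraph V)
    (M : Finset (Sym2 V)) (y : V → ℝ) (c : Sym2 V → ℝ) : Prop :=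
  (∀ e ∈ edgeFin G, e ∉ M → c e = 0) ∧
  (∀ e ∈ M, 0 ≤ c e ∧ c e ≤ 1) ∧
  M.card = nu G ∧
  (∀ e ∈ edgeFin G, ∃ z : ℤ, 2 * c e = (z : ℝ)) ∧
  (∀ v : V, y v = 0 ∨ y v = 1 / 2 ∨ y v = 1) ∧
  (∀ v ∈ geY G, 1 / 2 ≤ y v)

/-- a graph is factor-critical if deleting any vertex leaves a graph with a perfect matching -/
def IsFactorCritical (G : SimpleGraph V) : Prop :=
  ∀ v : V, ∃ M, IsMatching G M ∧ Exposed M v ∧ ∀ u : V, u ≠ v → ¬ Exposed M u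

/-- the neighbourhood `N_G(K)` of a vertex set `K` (outside of `K`) -/
def nbhd (G : SimpleGraph V) (K : Set V) : Set V :=
  {v | v ∉ K ∧ ∃ u ∈ K, G.Adj u v}

end Stab
namespace Stab

variable {V : Type*} [Fintype V] [DecidableEq V]

lemma mem_edgeFin {G : SimpleGraph V} {e : Sym2 V} : e ∈ edgeFin G ↔ e ∈ G.edgeSet := by
  simp [edgeFin]

lemma exists_cover (G : SimpleGraph V) (w : Sym2 V → ℝ) : ∃ y, IsFracCover G w y := by
  refine ⟨fun _ => ∑ f ∈ edgeFin G, |w f|,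
    fun v => Finset.sum_nonneg fun f _ => abs_nonneg _, ?_⟩
  intro u v huv
  have h1 : w s(u, v) ≤ |w s(u, v)| := le_abs_self _
  have h2 : |w s(u, v)| ≤ ∑ f ∈ edgeFin G, |w f| :=
    Finset.single_le_sum (f := fun f => |w f|) (fun f _ => abs_nonneg (w f)) (mem_edgeFin.2 huv)
  have h3 : (0 : ℝ) ≤ ∑ f ∈ edgeFin G, |w f| := Finset.sum_nonneg fun f _ => abs_nonneg _
  linarith

lemma weight_le_cover {G : SimpleGraph V} {w : Sym2 V → ℝ} {M : Finset (Sym2 V)} {y : V → ℝ}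
    (hM : IsMatching G M) (hy : IsFracCover G w y) : weight w M ≤ ∑ v, y v := by
  classical
  set s : Sym2 V → Finset V := fun e => Finset.univ.filter (· ∈ e) with hs
  have key : ∀ e ∈ M, w e ≤ ∑ v ∈ s e, y v := by
    intro e he
    have heE := hM.1 e he
    induction e using Sym2.ind with
    | _ a b =>
      have hadj : G.Adj a b := heE
      have hne : a ≠ b := hadj.ne
      have hset : s s(a, b) = {a, b} := by
        ext v; simp [hs, Sym2.mem_iff]
      rw [hset, Finset.sum_pair hne]
      exact hy.2 a b hadj
  have hdisj : (↑M : Set (Sym2 V)).PairwiseDisjoint s := by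
    intro e he f hf hef
    refine Finset.disjoint_left.2 ?_
    intro v hv hv'
    exact hM.2 e he f hf hef v (by simpa [hs] using hv) (by simpa [hs] using hv')
  calc weight w M ≤ ∑ e ∈ M, ∑ v ∈ s e, y v := Finset.sum_le_sum key
    _ = ∑ v ∈ M.biUnion s, y v := (Finset.sum_biUnion hdisj).symm
    _ ≤ ∑ v, y v := Finset.sum_le_sum_of_subset_of_nonneg (Finset.subset_univ _)
        (fun v _ _ => hy.1 v)

lemma matchSet_nonempty (G : SimpleGraph V) (w : Sym2 V → ℝ) :
    {x | ∃ M, IsMatching G M ∧ x = weight w M}.Nonempty :=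
  ⟨weight w ∅, ∅, ⟨fun e he => absurd he (Finset.notMem_empty e),
    fun e he => absurd he (Finset.notMem_empty e)⟩, rfl⟩

lemma tauW_le_cover {G : SimpleGraph V} {w : Sym2 V → ℝ} {y : V → ℝ}
    (hy : IsFracCover G w y) : tauW G w ≤ ∑ v, y v :=
  csInf_le ⟨0, by rintro x ⟨y', hy', rfl⟩; exact Finset.sum_nonneg fun v _ => hy'.1 v⟩
    ⟨y, hy, rfl⟩

lemma le_tauW {G : SimpleGraph V} {w : Sym2 V → ℝ} {b : ℝ}
    (h : ∀ y, IsFracCover G w y → b ≤ ∑ v, y v) : b ≤ tauW G w := by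
  obtain ⟨y0, hy0⟩ := exists_cover G w
  exact le_csInf ⟨_, y0, hy0, rfl⟩ (by rintro x ⟨y, hy, rfl⟩; exact h y hy)

lemma nuW_bddAbove (G : SimpleGraph V) (w : Sym2 V → ℝ) :
    BddAbove {x | ∃ M, IsMatching G M ∧ x = weight w M} := by
  refine ⟨∑ f ∈ edgeFin G, |w f|, ?_⟩
  rintro x ⟨M, hM, rfl⟩
  calc weight w M ≤ ∑ f ∈ M, |w f| := Finset.sum_le_sum fun f _ => le_abs_self _
    _ ≤ ∑ f ∈ edgeFin G, |w f| := Finset.sum_le_sum_of_subset_of_nonneg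
        (fun f hf => mem_edgeFin.2 (hM.1 f hf)) fun f _ _ => abs_nonneg _

lemma weight_le_nuW {G : SimpleGraph V} {w : Sym2 V → ℝ} {M : Finset (Sym2 V)}
    (hM : IsMatching G M) : weight w M ≤ nuW G w :=
  le_csSup (nuW_bddAbove G w) ⟨M, hM, rfl⟩

lemma nuW_le_tauW (G : SimpleGraph V) (w : Sym2 V → ℝ) : nuW G w ≤ tauW G w :=
  le_tauW fun y hy => csSup_le (matchSet_nonempty G w)
    (by rintro x ⟨M, hM, rfl⟩; exact weight_le_cover hM hy)

lemma nuW_eq_weight {G : SimpleGraph V} {w : Sym2 V → ℝ} {M : Finset (Sym2 V)}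
    (hM : IsMaxWeightMatching G w M) : nuW G w = weight w M :=
  le_antisymm (csSup_le (matchSet_nonempty G w)
    (by rintro x ⟨M', hM', rfl⟩; exact hM.2 M' hM')) (weight_le_nuW hM.1)

lemma cover_mod {G : SimpleGraph V} {c : Sym2 V → ℝ} {M : Finset (Sym2 V)} {y : V → ℝ}
    (hM : IsMatching G M)
    (h1 : ∀ f ∈ edgeFin G, f ∉ M → c f = 0)
    {u v : V} (huv : G.Adj u v) (heM : s(u, v) ∈ M)
    {ε : ℝ} (hε : 0 < ε) (hce : 1 + 2 * ε ≤ c s(u, v))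
    (hy : IsFracCover G (fun f => 1 + c f) y) (hyuv : y v ≤ y u) :
    IsFracCover G (fun f => 1 + Function.update c s(u, v) (c s(u, v) - ε) f)
      (Function.update y u (y u - ε)) := by
  have hyu : 1 + ε ≤ y u := by
    have := hy.2 u v huv
    simp only at this
    linarith
  constructor
  · intro x
    by_cases hx : x = u
    · subst hx; rw [Function.update_self]; linarith
    · rw [Function.update_of_ne hx]; exact hy.1 x
  · intro a b hab
    simp only
    by_cases hfe : s(a, b) = s(u, v)
    · rw [hfe, Function.update_self]
      rcases Sym2.eq_iff.1 hfe with ⟨rfl, rfl⟩ | ⟨rfl, rfl⟩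
      · have := hy.2 a b hab
        simp only at this
        rw [Function.update_self, Function.update_of_ne hab.ne']
        linarith
      · have := hy.2 b a hab.symm
        simp only at this
        rw [Function.update_of_ne hab.ne, Function.update_self]
        linarith
    · rw [Function.update_of_ne hfe]
      by_cases hau : a = u
      · subst hau
        have hcf : c s(a, b) = 0 := by
          refine h1 _ (mem_edgeFin.2 hab) ?_
          intro hmem
          exact hM.2 _ heM _ hmem (fun h => hfe h.symm) a (Sym2.mem_mk_left a v)
            (Sym2.mem_mk_left a b)
        rw [Function.update_self, Function.update_of_ne hab.ne', hcf]
        have := hy.1 b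
        linarith
      · by_cases hbu : b = u
        · subst hbu
          have hcf : c s(a, b) = 0 := by
            refine h1 _ (mem_edgeFin.2 hab) ?_
            intro hmem
            exact hM.2 _ heM _ hmem (fun h => hfe h.symm) b (Sym2.mem_mk_left b v)
              (Sym2.mem_mk_right a b)
          rw [Function.update_of_ne hau, Function.update_self, hcf]
          have := hy.1 a
          linarith
        · rw [Function.update_of_ne hau, Function.update_of_ne hbu]
          exact hy.2 a b hab

end Stab
namespace Stab

/-- If `c` is a minimum fractional additive stabilizer of the unit-weight
graph `G` and `M` is a matching of maximum `(1+c)`-weight, then `c_e = 0` off `M`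
and `0 ≤ c_e ≤ 1` on `M`. -/
theorem stmt0 {V : Type*} [Fintype V] [DecidableEq V] (G : SimpleGraph V)
    (c : Sym2 V → ℝ) (hc : IsMinStabilizer G c)
    (M : Finset (Sym2 V)) (hM : IsMaxWeightMatching G (fun e => 1 + c e) M) :
    (∀ e ∈ edgeFin G, e ∉ M → c e = 0) ∧ (∀ e ∈ M, 0 ≤ c e ∧ c e ≤ 1) := by
  obtain ⟨⟨hc0, hstab⟩, hmin⟩ := hc
  have hW : nuW G (fun e => 1 + c e) = weight (fun e => 1 + c e) M := nuW_eq_weight hM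
  have hT : tauW G (fun e => 1 + c e) = weight (fun e => 1 + c e) M := by
    rw [← hstab]; exact hW
  -- Part 1
  have h1 : ∀ e ∈ edgeFin G, e ∉ M → c e = 0 := by
    intro e heE heM
    by_contra hne
    have hce : 0 < c e := lt_of_le_of_ne (hc0 e heE) (Ne.symm hne)
    set c' := Function.update c e 0 with hc'
    have hc'le : ∀ f, f ∈ G.edgeSet → c' f ≤ c f := by
      intro f hf
      by_cases h : f = e
      · subst h; rw [hc', Function.update_self]; exact hc0 f (mem_edgeFin.2 hf)
      · rw [hc', Function.update_of_ne h]
    have hc'0 : ∀ f ∈ edgeFin G, 0 ≤ c' f := by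
      intro f hf
      by_cases h : f = e
      · subst h; rw [hc', Function.update_self]
      · rw [hc', Function.update_of_ne h]; exact hc0 f hf
    have hwM : weight (fun f => 1 + c' f) M = weight (fun f => 1 + c f) M := by
      refine Finset.sum_congr rfl fun f hf => ?_
      have hfe : f ≠ e := fun h => heM (h ▸ hf)
      simp [hc', Function.update_of_ne hfe]
    have hcov : ∀ y, IsFracCover G (fun f => 1 + c f) y →
        IsFracCover G (fun f => 1 + c' f) y := by
      intro y hy
      refine ⟨hy.1, fun a b hab => ?_⟩
      have h1' := hc'le s(a, b) hab
      have h2' := hy.2 a b hab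
      simp only at h2' ⊢
      linarith
    have htau' : tauW G (fun f => 1 + c' f) ≤ weight (fun e => 1 + c e) M := by
      rw [← hT]
      refine le_csInf ⟨_, (exists_cover G (fun f => 1 + c f)).choose,
        (exists_cover G (fun f => 1 + c f)).choose_spec, rfl⟩ ?_
      rintro x ⟨y, hy, rfl⟩
      exact tauW_le_cover (hcov y hy)
    have hnu' : weight (fun e => 1 + c e) M ≤ nuW G (fun f => 1 + c' f) := by
      rw [← hwM]; exact weight_le_nuW hM.1
    have hstab' : IsStable G (fun f => 1 + c' f) :=
      le_antisymm (nuW_le_tauW _ _) (le_trans htau' hnu')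
    have hcost : cost G c' = cost G c - c e := by
      unfold cost
      rw [← Finset.add_sum_erase _ c' heE, ← Finset.add_sum_erase _ c heE]
      have hsum : ∑ f ∈ (edgeFin G).erase e, c' f = ∑ f ∈ (edgeFin G).erase e, c f :=
        Finset.sum_congr rfl fun f hf => by
          rw [hc', Function.update_of_ne (Finset.ne_of_mem_erase hf)]
      rw [hsum, hc', Function.update_self]
      ring
    have hle := hmin c' ⟨hc'0, hstab'⟩
    rw [hcost] at hle
    linarith
  refine ⟨h1, fun e heM => ?_⟩
  induction e using Sym2.ind with
  | _ u v =>
  have heE : s(u, v) ∈ edgeFin G := mem_edgeFin.2 (hM.1.1 _ heM)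
  have huv : G.Adj u v := mem_edgeFin.1 heE
  refine ⟨hc0 _ heE, ?_⟩
  by_contra hgt
  push_neg at hgt
  set ε := (c s(u, v) - 1) / 2 with hε
  have hεpos : 0 < ε := by rw [hε]; linarith
  have hce2 : 1 + 2 * ε ≤ c s(u, v) := by rw [hε]; linarith
  set c' := Function.update c s(u, v) (c s(u, v) - ε) with hc'
  have hc'0 : ∀ f ∈ edgeFin G, 0 ≤ c' f := by
    intro f hf
    by_cases h : f = s(u, v)
    · subst h; rw [hc', Function.update_self]; linarith
    · rw [hc', Function.update_of_ne h]; exact hc0 f hf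
  have htau' : tauW G (fun f => 1 + c' f) + ε ≤ weight (fun e => 1 + c e) M := by
    rw [← hT]
    refine le_csInf ⟨_, (exists_cover G (fun f => 1 + c f)).choose,
      (exists_cover G (fun f => 1 + c f)).choose_spec, rfl⟩ ?_
    rintro x ⟨y, hy, rfl⟩
    have key : ∃ z : V, 1 + ε ≤ y z ∧
        IsFracCover G (fun f => 1 + c' f) (Function.update y z (y z - ε)) := by
      rcases le_total (y v) (y u) with hle | hle
      · have hcov := cover_mod hM.1 h1 huv heM hεpos hce2 hy hle
        refine ⟨u, ?_, hcov⟩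
        have h2' := hy.2 u v huv
        simp only at h2'
        linarith
      · have heM' : s(v, u) ∈ M := by rwa [Sym2.eq_swap]
        have hce2' : 1 + 2 * ε ≤ c s(v, u) := by rwa [Sym2.eq_swap]
        have hcov := cover_mod hM.1 h1 huv.symm heM' hεpos hce2' hy hle
        rw [show s(v, u) = s(u, v) from Sym2.eq_swap] at hcov
        refine ⟨v, ?_, hcov⟩
        have h2' := hy.2 u v huv
        simp only at h2'
        linarith
    obtain ⟨z, hz, hcov⟩ := key
    have hsum : ∑ x, Function.update y z (y z - ε) x = (∑ x, y x) - ε := by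
      rw [Finset.sum_update_of_mem (Finset.mem_univ z), Finset.sdiff_singleton_eq_erase,
        ← Finset.add_sum_erase _ y (Finset.mem_univ z)]
      ring
    have := tauW_le_cover hcov
    rw [hsum] at this
    linarith
  have hwM' : weight (fun f => 1 + c' f) M = weight (fun e => 1 + c e) M - ε := by
    unfold weight
    rw [← Finset.add_sum_erase _ _ heM, ← Finset.add_sum_erase _ (fun f => 1 + c f) heM]
    have hsum : ∑ f ∈ M.erase s(u, v), (1 + c' f) = ∑ f ∈ M.erase s(u, v), (1 + c f) :=
      Finset.sum_congr rfl fun f hf => by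
        rw [hc', Function.update_of_ne (Finset.ne_of_mem_erase hf)]
    rw [hsum]
    simp only [hc', Function.update_self]
    ring
  have hnu' : weight (fun e => 1 + c e) M - ε ≤ nuW G (fun f => 1 + c' f) := by
    rw [← hwM']; exact weight_le_nuW hM.1
  have hstab' : IsStable G (fun f => 1 + c' f) :=
    le_antisymm (nuW_le_tauW _ _) (by linarith)
  have hcost : cost G c' = cost G c - ε := by
    unfold cost
    rw [← Finset.add_sum_erase _ c' heE, ← Finset.add_sum_erase _ c heE]
    have hsum : ∑ f ∈ (edgeFin G).erase s(u, v), c' f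
        = ∑ f ∈ (edgeFin G).erase s(u, v), c f :=
      Finset.sum_congr rfl fun f hf => by
        rw [hc', Function.update_of_ne (Finset.ne_of_mem_erase hf)]
    rw [hsum, hc', Function.update_self]
    ring
  have hle := hmin c' ⟨hc'0, hstab'⟩
  rw [hcost] at hle
  linarith

end Stab
end
end

section
/- Let G=(V,E) be a finite simple graph and M a matching of G such that LP(G,M) is feasible; let G' be the bipartite double cover of G and M' the corresponding matching of G'. If (c',y') is an optimal solution of LP(G',M'), then the pair (c,y) defined by c_{uv} := (c'_{u_1 v_2} + c'_{u_2 v_1})/2 for every {u,v} ∈ M and y_u := (y'_{u_1} + y'_{u_2})/2 for every u ∈ V is an optimal solution of LP(G,M). -/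
open Finset
open scoped Classical

noncomputable section

namespace Stab

/-- a feasible solution `(c,y)` of the linear program `LP(G,M)` -/
def LPFeas {V : Type*} (G : SimpleGraph V) (M : Finset (Sym2 V))
    (c : Sym2 V → ℝ) (y : V → ℝ) : Prop :=
  (∀ e ∈ M, 0 ≤ c e) ∧ (∀ v, 0 ≤ y v) ∧
  (∀ u v : V, G.Adj u v → s(u, v) ∈ M → y u + y v = 1 + c s(u, v)) ∧
  (∀ u v : V, G.Adj u v → s(u, v) ∉ M → 1 ≤ y u + y v) ∧
  (∀ u : V, Exposed M u → y u = 0)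

/-- the objective value of `LP(G,M)` -/
def LPObj {V : Type*} (M : Finset (Sym2 V)) (c : Sym2 V → ℝ) : ℝ := ∑ e ∈ M, c e

/-- `(c,y)` is an optimal solution of `LP(G,M)` -/
def LPOpt {V : Type*} (G : SimpleGraph V) (M : Finset (Sym2 V))
    (c : Sym2 V → ℝ) (y : V → ℝ) : Prop :=
  LPFeas G M c y ∧ ∀ c' y', LPFeas G M c' y' → LPObj M c ≤ LPObj M c'

/-- the bipartite double cover of `G`: vertices `(u, false) = u₁` and `(u, true) = u₂`,
with `u_i` adjacent to `v_j` iff `u ~ v` in `G` and `i ≠ j`. -/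
def doubleCover {V : Type*} (G : SimpleGraph V) : SimpleGraph (V × Bool) where
  Adj a b := G.Adj a.1 b.1 ∧ a.2 ≠ b.2
  symm := ⟨fun a b h => ⟨h.1.symm, h.2.symm⟩⟩
  loopless := ⟨fun a h => h.2 rfl⟩

/-- the matching `M' = {{u₁,v₂}, {u₂,v₁} : {u,v} ∈ M}` of the bipartite double cover -/
def doubleMatch {V : Type*} [Fintype V] [DecidableEq V] (M : Finset (Sym2 V)) :
    Finset (Sym2 (V × Bool)) :=
  Finset.univ.filter fun e' => ∃ u v : V, s(u, v) ∈ M ∧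
    (e' = s((u, false), (v, true)) ∨ e' = s((u, true), (v, false)))

section Aux

variable {V : Type*} [Fintype V] [DecidableEq V]

lemma doubleCover_adj {G : SimpleGraph V} {a b : V × Bool} :
    (doubleCover G).Adj a b ↔ G.Adj a.1 b.1 ∧ a.2 ≠ b.2 := Iff.rfl

/-- the two lifted edges of an edge, as a finset -/
def lift2 (e : Sym2 V) : Finset (Sym2 (V × Bool)) :=
  Sym2.lift ⟨fun u v => {s((u, false), (v, true)), s((u, true), (v, false))}, by
    intro u v
    dsimp only
    rw [Finset.pair_comm,
      show s((u, true), (v, false)) = s((v, false), (u, true)) from Sym2.eq_swap,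
      show s((u, false), (v, true)) = s((v, true), (u, false)) from Sym2.eq_swap]⟩ e

lemma lift2_mk (u v : V) :
    lift2 s(u, v) = {s((u, false), (v, true)), s((u, true), (v, false))} := rfl

lemma map_fst_of_mem_lift2 {e : Sym2 V} {e' : Sym2 (V × Bool)} (h : e' ∈ lift2 e) :
    Sym2.map Prod.fst e' = e := by
  induction e using Sym2.ind with
  | _ u v =>
    rw [lift2_mk, Finset.mem_insert, Finset.mem_singleton] at h
    rcases h with h | h <;> subst h <;> simp [Sym2.eq_swap]

lemma mem_doubleMatch {M : Finset (Sym2 V)} {e' : Sym2 (V × Bool)} :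
    e' ∈ doubleMatch M ↔ ∃ u v : V, s(u, v) ∈ M ∧
      (e' = s((u, false), (v, true)) ∨ e' = s((u, true), (v, false))) := by
  simp [doubleMatch]

lemma lift_mem_doubleMatch₁ {M : Finset (Sym2 V)} {u v : V} (h : s(u, v) ∈ M) :
    s((u, false), (v, true)) ∈ doubleMatch M :=
  mem_doubleMatch.2 ⟨u, v, h, Or.inl rfl⟩

lemma lift_mem_doubleMatch₂ {M : Finset (Sym2 V)} {u v : V} (h : s(u, v) ∈ M) :
    s((u, true), (v, false)) ∈ doubleMatch M :=
  mem_doubleMatch.2 ⟨u, v, h, Or.inr rfl⟩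

lemma proj_mem_of_mem_doubleMatch {M : Finset (Sym2 V)} {e' : Sym2 (V × Bool)}
    (h : e' ∈ doubleMatch M) : Sym2.map Prod.fst e' ∈ M := by
  obtain ⟨u, v, hm, h | h⟩ := mem_doubleMatch.1 h <;> subst h <;>
    simpa [Sym2.eq_swap] using hm

lemma doubleMatch_eq_biUnion (M : Finset (Sym2 V)) :
    doubleMatch M = M.biUnion lift2 := by
  ext e'
  rw [Finset.mem_biUnion, mem_doubleMatch]
  constructor
  · rintro ⟨u, v, hm, h⟩
    exact ⟨s(u, v), hm, by rw [lift2_mk]; simpa using h⟩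
  · rintro ⟨e, he, h⟩
    induction e using Sym2.ind with
    | _ u v =>
      rw [lift2_mk] at h
      exact ⟨u, v, he, by simpa using h⟩

lemma exposed_doubleMatch {M : Finset (Sym2 V)} {u : V} (h : Exposed M u) (b : Bool) :
    Exposed (doubleMatch M) (u, b) := by
  intro e' he' hmem
  obtain ⟨a, d, hm, rfl | rfl⟩ := mem_doubleMatch.1 he' <;>
    rcases Sym2.mem_iff.1 hmem with h1 | h1 <;>
  · apply h s(a, d) hm
    simp only [Prod.ext_iff] at h1
    simp [h1.1]

lemma exposed_of_doubleMatch {M : Finset (Sym2 V)} {u : V} {b : Bool}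
    (h : Exposed (doubleMatch M) (u, b)) : Exposed M u := by
  intro e he hmem
  induction e using Sym2.ind with
  | _ p q =>
    rcases Sym2.mem_iff.1 hmem with rfl | rfl
    · cases b
      · exact h _ (lift_mem_doubleMatch₁ he) (by simp)
      · exact h _ (lift_mem_doubleMatch₂ he) (by simp)
    · cases b
      · exact h _ (lift_mem_doubleMatch₂ he) (by simp)
      · exact h _ (lift_mem_doubleMatch₁ he) (by simp)

lemma sum_doubleMatch (M : Finset (Sym2 V)) (hd : ∀ e ∈ M, ¬ e.IsDiag)
    (f : Sym2 (V × Bool) → ℝ) :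
    ∑ e' ∈ doubleMatch M, f e' =
      ∑ e ∈ M, Sym2.lift ⟨fun u v => f s((u, false), (v, true)) + f s((u, true), (v, false)),
        by
          intro u v
          dsimp only
          rw [add_comm,
            show s((u, true), (v, false)) = s((v, false), (u, true)) from Sym2.eq_swap,
            show s((u, false), (v, true)) = s((v, true), (u, false)) from Sym2.eq_swap]⟩ e := by
  have hdisj : Set.PairwiseDisjoint (↑M : Set (Sym2 V)) lift2 := by
    intro e _ f' _ hne
    refine Finset.disjoint_left.2 fun e' he hf => hne ?_
    rw [← map_fst_of_mem_lift2 he, map_fst_of_mem_lift2 hf]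
  rw [doubleMatch_eq_biUnion, Finset.sum_biUnion hdisj]
  refine Finset.sum_congr rfl fun e he => ?_
  induction e using Sym2.ind with
  | _ u v =>
    have huv : u ≠ v := fun h => hd _ he (by rw [h]; exact Sym2.mk_isDiag_iff.2 rfl)
    rw [lift2_mk, Finset.sum_pair, Sym2.lift_mk]
    simp [Sym2.eq_iff, Prod.ext_iff, huv]

end Aux

/-- if `(c',y')` is an optimal solution of `LP(G',M')` for the bipartite
double cover `G'` of `G` with matching `M'` corresponding to `M`, then averaging the two
copies yields an optimal solution of `LP(G,M)`. -/
theorem stmt4 {V : Type*} [Fintype V] [DecidableEq V] (G : SimpleGraph V)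
    (M : Finset (Sym2 V)) (hM : IsMatching G M)
    (hfeas : ∃ c y, LPFeas G M c y)
    (c' : Sym2 (V × Bool) → ℝ) (y' : V × Bool → ℝ)
    (hopt : LPOpt (doubleCover G) (doubleMatch M) c' y')
    (c : Sym2 V → ℝ)
    (hc : ∀ u v : V, s(u, v) ∈ M →
      c s(u, v) = (c' s((u, false), (v, true)) + c' s((u, true), (v, false))) / 2) :
    LPOpt G M c (fun u => (y' (u, false) + y' (u, true)) / 2) := by
  obtain ⟨⟨hc'0, hy'0, hMeq, hEge, hExp⟩, hmin⟩ := hopt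
  have hd : ∀ e ∈ M, ¬ e.IsDiag := fun e he =>
    G.not_isDiag_of_mem_edgeSet (hM.1 e he)
  constructor
  · refine ⟨?_, ?_, ?_, ?_, ?_⟩
    · intro e he
      induction e using Sym2.ind with
      | _ u v =>
        rw [hc u v he]
        have h1 := hc'0 _ (lift_mem_doubleMatch₁ he)
        have h2 := hc'0 _ (lift_mem_doubleMatch₂ he)
        linarith
    · intro v
      have h1 := hy'0 (v, false)
      have h2 := hy'0 (v, true)
      dsimp only
      linarith
    · intro u v hadj hmem
      have h1 := hMeq (u, false) (v, true)
        (doubleCover_adj.2 ⟨hadj, by simp⟩) (lift_mem_doubleMatch₁ hmem)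
      have h2 := hMeq (u, true) (v, false)
        (doubleCover_adj.2 ⟨hadj, by simp⟩) (lift_mem_doubleMatch₂ hmem)
      rw [hc u v hmem]
      dsimp only
      linarith
    · intro u v hadj hmem
      have hm1 : s((u, false), (v, true)) ∉ doubleMatch M := fun h =>
        hmem (by simpa using proj_mem_of_mem_doubleMatch h)
      have hm2 : s((u, true), (v, false)) ∉ doubleMatch M := fun h =>
        hmem (by simpa using proj_mem_of_mem_doubleMatch h)
      have h1 := hEge (u, false) (v, true) (doubleCover_adj.2 ⟨hadj, by simp⟩) hm1
      have h2 := hEge (u, true) (v, false) (doubleCover_adj.2 ⟨hadj, by simp⟩) hm2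
      dsimp only
      linarith
    · intro u hu
      have h1 := hExp (u, false) (exposed_doubleMatch hu false)
      have h2 := hExp (u, true) (exposed_doubleMatch hu true)
      dsimp only
      rw [h1, h2]
      norm_num
  · intro c'' y'' hfs
    obtain ⟨h''c0, h''y0, h''eq, h''ge, h''exp⟩ := hfs
    set C : Sym2 (V × Bool) → ℝ := fun e' => c'' (Sym2.map Prod.fst e') with hCdef
    set Y : V × Bool → ℝ := fun a => y'' a.1 with hYdef
    have hfeasC : LPFeas (doubleCover G) (doubleMatch M) C Y := by
      refine ⟨?_, ?_, ?_, ?_, ?_⟩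
      · intro e' he'
        exact h''c0 _ (proj_mem_of_mem_doubleMatch he')
      · intro a
        exact h''y0 a.1
      · intro a b hab hm
        have hproj : s(a.1, b.1) ∈ M := by
          simpa using proj_mem_of_mem_doubleMatch hm
        have := h''eq a.1 b.1 (doubleCover_adj.1 hab).1 hproj
        simp only [hCdef, hYdef, Sym2.map_pair_eq]
        linarith
      · intro a b hab hm
        refine h''ge a.1 b.1 (doubleCover_adj.1 hab).1 fun hmem => hm ?_
        obtain ⟨u, ba⟩ := a
        obtain ⟨v, bb⟩ := b
        have hne := (doubleCover_adj.1 hab).2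
        simp only at hne hmem ⊢
        cases ba <;> cases bb
        · exact absurd rfl hne
        · exact lift_mem_doubleMatch₁ hmem
        · exact lift_mem_doubleMatch₂ hmem
        · exact absurd rfl hne
      · intro a ha
        obtain ⟨u, b⟩ := a
        exact h''exp u (exposed_of_doubleMatch ha)
    have hle := hmin C Y hfeasC
    have hA : 2 * LPObj M c = LPObj (doubleMatch M) c' := by
      rw [LPObj, LPObj, sum_doubleMatch M hd, Finset.mul_sum]
      refine Finset.sum_congr rfl fun e he => ?_
      induction e using Sym2.ind with
      | _ u v =>
        rw [hc u v he, Sym2.lift_mk]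
        ring
    have hB : LPObj (doubleMatch M) C = 2 * LPObj M c'' := by
      rw [LPObj, LPObj, sum_doubleMatch M hd, Finset.mul_sum]
      refine Finset.sum_congr rfl fun e he => ?_
      induction e using Sym2.ind with
      | _ u v =>
        rw [Sym2.lift_mk]
        simp only [hCdef, Sym2.map_pair_eq]
        ring
    rw [hB] at hle
    linarith

end Stab
end
end

section
/- Let G=(V,E) be a finite simple graph with Gallai–Edmonds decomposition V = X ∪ Y ∪ Z, and let (M,y,c) be a feasible MFASP solution satisfying properties (a)–(d). Let K be a nontrivial connected component of G[X] that contains a vertex exposed by M. Then ∑_{e ∈ E(K)} c_e ≥ 1. -/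
open Finset
open scoped Classical

noncomputable section

namespace Stab

section AuxStmt6

variable {V : Type*}

private lemma sym2_exists_eq' {α : Type*} (f : Sym2 α) : ∃ a b, f = s(a,b) := by
  induction f using Sym2.ind with
  | _ a b => exact ⟨a, b, rfl⟩

variable [Fintype V] [DecidableEq V] {G : SimpleGraph V}

set_option linter.unusedSectionVars false

private lemma matching_subset' {Q Q' : Finset (Sym2 V)} (h : IsMatching G Q) (hs : Q' ⊆ Q) :
    IsMatching G Q' :=
  ⟨fun e he => h.1 e (hs he), fun e he f hf hne v hv => h.2 e (hs he) f (hs hf) hne v hv⟩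

private lemma card_le_nu' {Q : Finset (Sym2 V)} (hQ : IsMatching G Q) : Q.card ≤ nu G := by
  apply le_csSup
  · exact ⟨Fintype.card (Sym2 V), fun n hn => by
      obtain ⟨P, _, rfl⟩ := hn; exact Finset.card_le_univ P⟩
  · exact ⟨Q, hQ, rfl⟩

/-- sum of y over the two endpoints of an edge -/
private def Ysum (y : V → ℝ) : Sym2 V → ℝ :=
  Sym2.lift ⟨fun a b => y a + y b, fun a b => by ring⟩

@[simp] private lemma Ysum_mk (y : V → ℝ) (a b : V) : Ysum y s(a, b) = y a + y b := rfl

/-- the set of vertices covered by a set of edges -/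
private def cov (Q : Finset (Sym2 V)) : Finset V := univ.filter (fun v => ∃ f ∈ Q, v ∈ f)

private lemma mem_cov {Q : Finset (Sym2 V)} {v : V} : v ∈ cov Q ↔ ∃ f ∈ Q, v ∈ f := by
  simp [cov]

private lemma sum_cov (y : V → ℝ) {Q : Finset (Sym2 V)} (hQ : IsMatching G Q) :
    ∑ v ∈ cov Q, y v = ∑ f ∈ Q, Ysum y f := by
  classical
  induction Q using Finset.induction_on with
  | empty => simp [cov]
  | @insert f Q' hfQ ih =>
    have hQ' : IsMatching G Q' := matching_subset' hQ (Finset.subset_insert _ _)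
    have hfG : f ∈ G.edgeSet := hQ.1 f (Finset.mem_insert_self _ _)
    obtain ⟨a, b, rfl⟩ := sym2_exists_eq' f
    have hab : a ≠ b := (G.mem_edgeSet.mp hfG).ne
    have hdisj : ∀ v, v ∈ (s(a,b) : Sym2 V) → v ∉ cov Q' := by
      intro v hv hvc
      obtain ⟨g, hg, hvg⟩ := mem_cov.mp hvc
      exact hQ.2 s(a,b) (Finset.mem_insert_self _ _) g (Finset.mem_insert_of_mem hg)
        (fun h => hfQ (by rw [h]; exact hg)) v hv hvg
    have ha : a ∉ cov Q' := hdisj a (by simp)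
    have hb : b ∉ cov Q' := hdisj b (by simp)
    have hcovins : cov (insert s(a,b) Q') = insert a (insert b (cov Q')) := by
      ext v
      simp only [mem_cov, Finset.mem_insert]
      constructor
      · rintro ⟨g, hg | hg, hvg⟩
        · rw [hg] at hvg
          rcases Sym2.mem_iff.mp hvg with h | h
          · exact Or.inl h
          · exact Or.inr (Or.inl h)
        · exact Or.inr (Or.inr (mem_cov.mp (mem_cov.mpr ⟨g, hg, hvg⟩)))
      · rintro (h | h | h)
        · exact ⟨s(a,b), Or.inl rfl, by simp [Sym2.mem_iff, h]⟩
        · exact ⟨s(a,b), Or.inl rfl, by simp [Sym2.mem_iff, h]⟩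
        · obtain ⟨g, hg, hvg⟩ := mem_cov.mp (mem_cov.mpr h); exact ⟨g, Or.inr hg, hvg⟩
    rw [hcovins, Finset.sum_insert (by simp [hab, ha]), Finset.sum_insert hb,
      Finset.sum_insert hfQ, ih hQ', Ysum_mk]
    ring

private lemma swap' {Q : Finset (Sym2 V)} (hQ : IsMatching G Q) {f : Sym2 V} (hf : f ∈ Q)
    {a b : V} (hab : G.Adj a b) (haexp : ∀ g ∈ Q, a ∉ g) (hbf : b ∈ f) :
    IsMatching G ((Q.erase f) ∪ {s(a,b)}) ∧
    ((Q.erase f) ∪ {s(a,b)}).card = Q.card ∧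
    ∀ v, v ∈ f → v ∉ (s(a,b) : Sym2 V) → ∀ g ∈ (Q.erase f) ∪ {s(a,b)}, v ∉ g := by
  have habQ : s(a,b) ∉ Q := fun h => haexp _ h (by simp)
  have hmem : ∀ g, g ∈ (Q.erase f) ∪ {s(a,b)} ↔ (g ∈ Q.erase f ∨ g = s(a,b)) := by
    intro g; rw [Finset.mem_union, Finset.mem_singleton]
  refine ⟨⟨?_, ?_⟩, ?_, ?_⟩
  · intro e he
    rcases (hmem e).mp he with h | h
    · exact hQ.1 e (Finset.mem_of_mem_erase h)
    · rw [h]; exact G.mem_edgeSet.mpr hab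
  · intro e he g hg hne v hve hvg
    rcases (hmem e).mp he with he' | he' <;> rcases (hmem g).mp hg with hg' | hg'
    · exact hQ.2 e (Finset.mem_of_mem_erase he') g (Finset.mem_of_mem_erase hg') hne v hve hvg
    · rw [hg'] at hvg
      rcases Sym2.mem_iff.mp hvg with rfl | rfl
      · exact haexp e (Finset.mem_of_mem_erase he') hve
      · exact hQ.2 f hf e (Finset.mem_of_mem_erase he')
          (Ne.symm (Finset.ne_of_mem_erase he')) v hbf hve
    · rw [he'] at hve
      rcases Sym2.mem_iff.mp hve with rfl | rfl
      · exact haexp g (Finset.mem_of_mem_erase hg') hvg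
      · exact hQ.2 f hf g (Finset.mem_of_mem_erase hg')
          (Ne.symm (Finset.ne_of_mem_erase hg')) v hbf hvg
    · exact hne (he'.trans hg'.symm)
  · have h1 : s(a,b) ∉ Q.erase f := fun h => habQ (Finset.mem_of_mem_erase h)
    have hpos : 1 ≤ Q.card := Finset.card_pos.mpr ⟨f, hf⟩
    rw [Finset.card_union_of_disjoint (by simp [h1]), Finset.card_erase_of_mem hf,
      Finset.card_singleton]
    omega
  · intro v hvf hvab g hg hvg
    rcases (hmem g).mp hg with hg' | hg'
    · exact hQ.2 f hf g (Finset.mem_of_mem_erase hg')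
        (Ne.symm (Finset.ne_of_mem_erase hg')) v hvf hvg
    · rw [hg'] at hvg; exact hvab hvg

/-- reachability by a chain of edges from a finite edge set -/
private def Reach (E : Finset (Sym2 V)) (p q : V) : Prop :=
  ∃ (d : ℕ) (z : ℕ → V), z 0 = p ∧ z d = q ∧ ∀ j < d, s(z j, z (j+1)) ∈ E

private lemma reach_refl {E : Finset (Sym2 V)} (p : V) : Reach E p p :=
  ⟨0, fun _ => p, rfl, rfl, fun j hj => absurd hj (by omega)⟩

private lemma reach_tail {E : Finset (Sym2 V)} {p q r : V} (h : Reach E p q)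
    (hE : s(q, r) ∈ E) : Reach E p r := by
  obtain ⟨d, z, h0, hd, he⟩ := h
  refine ⟨d + 1, fun k => if k ≤ d then z k else r, by simp [h0], by simp, ?_⟩
  intro j hj
  rcases Nat.lt_or_ge j d with hlt | hge
  · simpa [Nat.le_of_lt hlt, Nat.succ_le_of_lt hlt] using he j hlt
  · have : j = d := by omega
    subst this
    simpa [hd] using hE

private lemma reach_symm {E : Finset (Sym2 V)} {p q : V} (h : Reach E p q) : Reach E q p := by
  obtain ⟨d, z, h0, hd, he⟩ := h
  refine ⟨d, fun j => z (d - j), by simp [hd], by simp [h0], ?_⟩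
  intro j hj
  have h1 : d - j = (d - (j+1)) + 1 := by omega
  have h2 : d - (j+1) < d := by omega
  show s(z (d - j), z (d - (j+1))) ∈ E
  rw [h1, Sym2.eq_swap]
  exact he _ h2

private lemma fullU {P Q D : Finset (Sym2 V)} {U : Set V}
    (hD : ∀ f, f ∈ D ↔ (((f ∈ P ∧ f ∉ Q) ∨ (f ∈ Q ∧ f ∉ P)) ∧ ∃ v ∈ f, v ∈ U))
    (hU : ∀ a b : V, a ∈ U →
      ((s(a,b) ∈ P ∧ s(a,b) ∉ Q) ∨ (s(a,b) ∈ Q ∧ s(a,b) ∉ P)) → b ∈ U) :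
    ∀ f ∈ D, ∀ v ∈ f, v ∈ U := by
  intro f hfD v hvf
  obtain ⟨hside, x, hxf, hxU⟩ := (hD f).mp hfD
  obtain ⟨a, b, rfl⟩ := sym2_exists_eq' f
  rcases Sym2.mem_iff.mp hxf with rfl | rfl <;> rcases Sym2.mem_iff.mp hvf with rfl | rfl
  · exact hxU
  · exact hU x v hxU hside
  · refine hU x v hxU ?_
    rwa [Sym2.eq_swap]
  · exact hxU

private lemma flip' {P Q D : Finset (Sym2 V)} (hP : IsMatching G P) (hQ : IsMatching G Q)
    (U : Set V)
    (hD : ∀ f, f ∈ D ↔ (((f ∈ P ∧ f ∉ Q) ∨ (f ∈ Q ∧ f ∉ P)) ∧ ∃ v ∈ f, v ∈ U))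
    (hU : ∀ a b : V, a ∈ U →
      ((s(a,b) ∈ P ∧ s(a,b) ∉ Q) ∨ (s(a,b) ∈ Q ∧ s(a,b) ∉ P)) → b ∈ U) :
    IsMatching G ((P \ D) ∪ (Q ∩ D)) := by
  have hfull : ∀ f ∈ D, ∀ v ∈ f, v ∈ U := fullU hD hU
  constructor
  · intro e he
    rcases Finset.mem_union.mp he with h | h
    · exact hP.1 e (Finset.mem_sdiff.mp h).1
    · exact hQ.1 e (Finset.mem_inter.mp h).1
  · intro e he g hg hne v hve hvg
    rcases Finset.mem_union.mp he with he' | he' <;> rcases Finset.mem_union.mp hg with hg' | hg'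
    · exact hP.2 e (Finset.mem_sdiff.mp he').1 g (Finset.mem_sdiff.mp hg').1 hne v hve hvg
    · have hvU : v ∈ U := hfull g (Finset.mem_inter.mp hg').2 v hvg
      have heP : e ∈ P := (Finset.mem_sdiff.mp he').1
      by_cases heQ : e ∈ Q
      · exact hQ.2 e heQ g (Finset.mem_inter.mp hg').1 hne v hve hvg
      · exact (Finset.mem_sdiff.mp he').2 ((hD e).mpr ⟨Or.inl ⟨heP, heQ⟩, v, hve, hvU⟩)
    · have hvU : v ∈ U := hfull e (Finset.mem_inter.mp he').2 v hve
      have hgP : g ∈ P := (Finset.mem_sdiff.mp hg').1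
      by_cases hgQ : g ∈ Q
      · exact hQ.2 e (Finset.mem_inter.mp he').1 g hgQ hne v hve hvg
      · exact (Finset.mem_sdiff.mp hg').2 ((hD g).mpr ⟨Or.inl ⟨hgP, hgQ⟩, v, hvg, hvU⟩)
    · exact hQ.2 e (Finset.mem_inter.mp he').1 g (Finset.mem_inter.mp hg').1 hne v hve hvg

private lemma exists_adj_of_connected {K : Set V} (hconn : (G.induce K).Connected)
    {a b : V} (ha : a ∈ K) (hb : b ∈ K) (hne : a ≠ b) : ∃ w ∈ K, G.Adj a w := by
  obtain ⟨p⟩ := hconn.preconnected ⟨a, ha⟩ ⟨b, hb⟩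
  have key : ∀ (x y : ↥K), (G.induce K).Walk x y → x ≠ y → ∃ w ∈ K, G.Adj ↑x w := by
    intro x y q
    induction q with
    | nil => intro h; exact absurd rfl h
    | @cons x' m y' hadj q' ih =>
      intro _
      exact ⟨↑m, m.2, by simpa using hadj⟩
  exact key ⟨a, ha⟩ ⟨b, hb⟩ p (fun h => hne (congrArg Subtype.val h))

set_option maxHeartbeats 1000000 in
private lemma claim1 {M N : Finset (Sym2 V)} {K : Set V} {u w : V}
    (hM : IsMatching G M) (hMcard : M.card = nu G)
    (hN : IsMatching G N) (hNcard : N.card = nu G)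
    (huexp : Exposed M u) (huw : G.Adj u w)
    (hwK : w ∈ K)
    (hclosure : ∀ a ∈ K, ∀ b ∈ geX G, G.Adj a b → b ∈ K)
    (hwexpN : Exposed N w)
    {x : V} (hreach : Reach ((M \ N) ∪ (N \ M)) w x) : x ∈ K := by
  by_contra hxK
  set MDN : Finset (Sym2 V) := (M \ N) ∪ (N \ M) with hMDN
  have hMDNmem : ∀ {g : Sym2 V}, g ∈ MDN ↔ ((g ∈ M ∧ g ∉ N) ∨ (g ∈ N ∧ g ∉ M)) := by
    intro g; simp [hMDN, Finset.mem_union, Finset.mem_sdiff]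
  set S : Set ℕ :=
    {d : ℕ | ∃ z : ℕ → V, z 0 = w ∧ (∀ j < d, s(z j, z (j+1)) ∈ MDN) ∧ z d ∉ K} with hS
  have hSne : S.Nonempty := by
    obtain ⟨d, z, h0, hd, he⟩ := hreach
    exact ⟨d, z, h0, he, by rw [hd]; exact hxK⟩
  set d₀ := sInf S with hd₀def
  obtain ⟨z, hz0, hzedge, hzdK⟩ : d₀ ∈ S := Nat.sInf_mem hSne
  have hmin : ∀ d', d' < d₀ → d' ∉ S := fun d' h hmem => absurd (Nat.sInf_le hmem) (by omega)
  have hprefK : ∀ j, j < d₀ → z j ∈ K := by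
    intro j hj
    by_contra hjK
    exact hmin j hj ⟨z, hz0, fun j' hj' => hzedge j' (by omega), hjK⟩
  have d₀pos : 0 < d₀ := by
    by_contra h
    have h0 : d₀ = 0 := by omega
    apply hzdK
    rw [h0, hz0]
    exact hwK
  have hinj : ∀ i j, i ≤ d₀ → j ≤ d₀ → i < j → z i ≠ z j := by
    intro i j hi hj hij heq
    rcases Nat.lt_or_ge j d₀ with hjlt | hjge
    · have hd' : d₀ - (j - i) < d₀ := by omega
      apply hmin (d₀ - (j - i)) hd'
      refine ⟨fun k => if k ≤ i then z k else z (k + (j - i)), by simp [hz0], ?_, ?_⟩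
      · intro k hk
        rcases Nat.lt_trichotomy k i with h | h | h
        · have h1 : k ≤ i := by omega
          have h2 : k + 1 ≤ i := by omega
          simp only [if_pos h1, if_pos h2]
          exact hzedge k (by omega)
        · subst h
          have h2 : ¬ (k + 1 ≤ k) := by omega
          simp only [if_pos (le_refl k), if_neg h2]
          have : k + 1 + (j - k) = j + 1 := by omega
          rw [this, heq]
          exact hzedge j (by omega)
        · have h1 : ¬ (k ≤ i) := by omega
          have h2 : ¬ (k + 1 ≤ i) := by omega
          simp only [if_neg h1, if_neg h2]
          have : k + 1 + (j - i) = (k + (j - i)) + 1 := by omega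
          rw [this]
          exact hzedge (k + (j - i)) (by omega)
      · have h1 : ¬ (d₀ - (j - i) ≤ i) := by omega
        simp only [if_neg h1]
        have : d₀ - (j - i) + (j - i) = d₀ := by omega
        rw [this]
        exact hzdK
    · have : j = d₀ := by omega
      subst this
      exact hzdK (heq ▸ hprefK i (by omega))
  have epar : ∀ j, j < d₀ →
      ((Even j → s(z j, z (j+1)) ∈ M ∧ s(z j, z (j+1)) ∉ N) ∧
       (¬ Even j → s(z j, z (j+1)) ∈ N ∧ s(z j, z (j+1)) ∉ M)) := by
    intro j
    induction j using Nat.strong_induction_on with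
    | _ j ih =>
      intro hj
      match j with
      | 0 =>
        have h0 : s(z 0, z 1) ∈ MDN := hzedge 0 hj
        have hnotN : s(z 0, z 1) ∉ N := by
          intro hN'
          exact hwexpN _ hN' (by rw [← hz0]; simp)
        rcases hMDNmem.mp h0 with h | h
        · exact ⟨fun _ => h, fun h' => absurd (Even.zero) h'⟩
        · exact absurd h.1 hnotN
      | (j' + 1) =>
        have hj' : j' < d₀ := by omega
        have hp := ih j' (by omega) hj'
        have hcur : s(z (j'+1), z (j'+2)) ∈ MDN := hzedge (j'+1) hj
        have hne : s(z j', z (j'+1)) ≠ s(z (j'+1), z (j'+2)) := by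
          intro h
          rcases Sym2.eq_iff.mp h with ⟨h1, h2⟩ | ⟨h1, h2⟩
          · exact hinj j' (j'+1) (by omega) (by omega) (by omega) h1
          · exact hinj j' (j'+2) (by omega) (by omega) (by omega) h1
        have hshare1 : z (j'+1) ∈ s(z j', z (j'+1)) := by simp
        have hshare2 : z (j'+1) ∈ s(z (j'+1), z (j'+2)) := by simp
        by_cases hpar : Even j'
        · have hjM : s(z j', z (j'+1)) ∈ M := (hp.1 hpar).1
          have hcurM : s(z (j'+1), z (j'+2)) ∉ M := by
            intro hMm
            exact hM.2 _ hjM _ hMm hne _ hshare1 hshare2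
          have hcurN : s(z (j'+1), z (j'+2)) ∈ N := by
            rcases hMDNmem.mp hcur with h | h
            · exact absurd h.1 hcurM
            · exact h.1
          refine ⟨fun h => absurd h (by simp [Nat.even_add_one, hpar]), fun _ => ⟨hcurN, hcurM⟩⟩
        · have hjN : s(z j', z (j'+1)) ∈ N := (hp.2 hpar).1
          have hcurN : s(z (j'+1), z (j'+2)) ∉ N := by
            intro hNm
            exact hN.2 _ hjN _ hNm hne _ hshare1 hshare2
          have hcurM : s(z (j'+1), z (j'+2)) ∈ M := by
            rcases hMDNmem.mp hcur with h | h
            · exact h.1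
            · exact absurd h.1 hcurN
          have hevs : Even (j' + 1) := Nat.even_add_one.mpr hpar
          exact ⟨fun _ => ⟨hcurM, hcurN⟩, fun h => absurd hevs h⟩
  -- the "N-side machine": exposes even-position vertices
  have stmtN : ∀ i, 2*i ≤ d₀ → ∃ Q, IsMatching G Q ∧ Q.card = nu G ∧
      (∀ g ∈ Q, z (2*i) ∉ g) ∧
      (∀ k, 2*i < k → k < d₀ → ¬ Even k → s(z k, z (k+1)) ∈ Q) := by
    intro i
    induction i with
    | zero =>
      intro _
      refine ⟨N, hN, hNcard, ?_, ?_⟩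
      · intro g hg
        have h := hwexpN g hg
        rw [show (2*0 : ℕ) = 0 from rfl, hz0]
        exact h
      · intro k hk1 hk2 hk3
        exact ((epar k hk2).2 hk3).1
    | succ i ih =>
      intro h2
      obtain ⟨Q, hQm, hQc, hQe, hQinv⟩ := ih (by omega)
      have hfQ : s(z (2*i+1), z (2*i+1+1)) ∈ Q := by
        refine hQinv (2*i+1) (by omega) (by omega) ?_
        intro h
        rw [Nat.even_add_one] at h
        exact h ⟨i, two_mul i⟩
      have hadj : G.Adj (z (2*i)) (z (2*i+1)) :=
        G.mem_edgeSet.mp (hM.1 _ ((epar (2*i) (by omega)).1 ⟨i, two_mul i⟩).1)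
      obtain ⟨hQ'm, hQ'c, hQ'e⟩ := swap' hQm hfQ hadj hQe (by simp)
      refine ⟨_, hQ'm, hQ'c.trans hQc, ?_, ?_⟩
      · rw [show 2*(i+1) = 2*i+1+1 from by omega]
        refine hQ'e (z (2*i+1+1)) (by simp) ?_
        rw [Sym2.mem_iff]
        rintro (h | h)
        · exact hinj (2*i) (2*i+2) (by omega) (by omega) (by omega) h.symm
        · exact hinj (2*i+1) (2*i+2) (by omega) (by omega) (by omega) h.symm
      · intro k hk1' hk2' hk3'
        have hkQ : s(z k, z (k+1)) ∈ Q := hQinv k (by omega) hk2' hk3'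
        have hne : s(z k, z (k+1)) ≠ s(z (2*i+1), z (2*i+1+1)) := by
          intro h
          rcases Sym2.eq_iff.mp h with ⟨h1, _⟩ | ⟨h1, _⟩
          · exact hinj (2*i+1) k (by omega) (by omega) (by omega) h1.symm
          · exact hinj (2*i+2) k (by omega) (by omega) (by omega) h1.symm
        exact Finset.mem_union_left _ (Finset.mem_erase.mpr ⟨hne, hkQ⟩)
  -- the "M-side machine": exposes odd-position vertices
  have stmtM : ∀ i, 2*i+1 ≤ d₀ → ∃ Q, IsMatching G Q ∧ Q.card = nu G ∧
      (∀ g ∈ Q, z (2*i+1) ∉ g) ∧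
      (∀ k, 2*i+1 < k → k < d₀ → Even k → s(z k, z (k+1)) ∈ Q) := by
    intro i
    induction i with
    | zero =>
      intro h1
      have hf0 : s(z 0, z 1) ∈ M := ((epar 0 (by omega)).1 Even.zero).1
      have hadj : G.Adj u (z 0) := by rw [hz0]; exact huw
      obtain ⟨hQ'm, hQ'c, hQ'e⟩ := swap' hM hf0 hadj (fun g hg => huexp g hg) (by simp)
      refine ⟨_, hQ'm, hQ'c.trans hMcard, ?_, ?_⟩
      · refine hQ'e (z 1) (by simp) ?_
        rw [Sym2.mem_iff]
        rintro (h | h)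
        · exact huexp _ hf0 (by rw [← h]; simp)
        · exact hinj 0 1 (by omega) (by omega) (by omega) h.symm
      · intro k hk1' hk2' hk3'
        have hkM : s(z k, z (k+1)) ∈ M := ((epar k hk2').1 hk3').1
        have hne : s(z k, z (k+1)) ≠ s(z 0, z 1) := by
          intro h
          rcases Sym2.eq_iff.mp h with ⟨h1, _⟩ | ⟨h1, _⟩
          · exact hinj 0 k (by omega) (by omega) (by omega) h1.symm
          · exact hinj 1 k (by omega) (by omega) (by omega) h1.symm
        exact Finset.mem_union_left _ (Finset.mem_erase.mpr ⟨hne, hkM⟩)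
    | succ i ih =>
      intro h2
      obtain ⟨Q, hQm, hQc, hQe, hQinv⟩ := ih (by omega)
      have hfQ : s(z (2*i+2), z (2*i+2+1)) ∈ Q :=
        hQinv (2*i+2) (by omega) (by omega) ⟨i+1, by omega⟩
      have hadj : G.Adj (z (2*i+1)) (z (2*i+2)) := by
        refine G.mem_edgeSet.mp (hN.1 _ ((epar (2*i+1) (by omega)).2 ?_).1)
        intro h
        rw [Nat.even_add_one] at h
        exact h ⟨i, two_mul i⟩
      obtain ⟨hQ'm, hQ'c, hQ'e⟩ := swap' hQm hfQ hadj hQe (by simp)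
      refine ⟨_, hQ'm, hQ'c.trans hQc, ?_, ?_⟩
      · rw [show 2*(i+1)+1 = 2*i+2+1 from by omega]
        refine hQ'e (z (2*i+2+1)) (by simp) ?_
        rw [Sym2.mem_iff]
        rintro (h | h)
        · exact hinj (2*i+1) (2*i+3) (by omega) (by omega) (by omega) h.symm
        · exact hinj (2*i+2) (2*i+3) (by omega) (by omega) (by omega) h.symm
      · intro k hk1' hk2' hk3'
        have hkQ : s(z k, z (k+1)) ∈ Q := hQinv k (by omega) hk2' hk3'
        have hne : s(z k, z (k+1)) ≠ s(z (2*i+2), z (2*i+2+1)) := by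
          intro h
          rcases Sym2.eq_iff.mp h with ⟨h1, _⟩ | ⟨h1, _⟩
          · exact hinj (2*i+2) k (by omega) (by omega) (by omega) h1.symm
          · exact hinj (2*i+3) k (by omega) (by omega) (by omega) h1.symm
        exact Finset.mem_union_left _ (Finset.mem_erase.mpr ⟨hne, hkQ⟩)
  -- every vertex on the chain is in K
  have allK : ∀ j, j ≤ d₀ → z j ∈ K := by
    intro j
    induction j using Nat.strong_induction_on with
    | _ j ih =>
      intro hj
      match j with
      | 0 => rw [hz0]; exact hwK
      | (j' + 1) =>
        have hjK' : z j' ∈ K := ih j' (by omega) (by omega)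
        have hadj : G.Adj (z j') (z (j'+1)) := by
          have h := hzedge j' (by omega)
          rcases hMDNmem.mp h with h' | h'
          · exact G.mem_edgeSet.mp (hM.1 _ h'.1)
          · exact G.mem_edgeSet.mp (hN.1 _ h'.1)
        have hX : z (j'+1) ∈ geX G := by
          show Inessential G (z (j'+1))
          rcases Nat.even_or_odd j' with hpar | hpar
          · obtain ⟨r, hr⟩ := hpar
            obtain ⟨Q, hQm, hQc, hQe, _⟩ := stmtM r (by omega)
            have hidx : 2*r+1 = j'+1 := by omega
            refine ⟨Q, ⟨hQm, fun M' hM' => ?_⟩, ?_⟩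
            · rw [hQc]; exact card_le_nu' hM'
            · rw [← hidx]; exact hQe
          · obtain ⟨r, hr⟩ := hpar
            obtain ⟨Q, hQm, hQc, hQe, _⟩ := stmtN (r+1) (by omega)
            have hidx : 2*(r+1) = j'+1 := by omega
            refine ⟨Q, ⟨hQm, fun M' hM' => ?_⟩, ?_⟩
            · rw [hQc]; exact card_le_nu' hM'
            · rw [← hidx]; exact hQe
        exact hclosure (z j') hjK' (z (j'+1)) hX hadj
  exact hzdK (allK d₀ le_rfl)

end AuxStmt6

end Stab

namespace Stab

set_option maxHeartbeats 4000000 in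
/-- for a feasible MFASP solution `(M,y,c)` satisfying properties (a)–(d),
every nontrivial connected component `K` of `G[X]` containing an `M`-exposed vertex
satisfies `∑_{e ∈ E(K)} c_e ≥ 1`. -/
theorem stmt6 {V : Type*} [Fintype V] [DecidableEq V] (G : SimpleGraph V)
    (M : Finset (Sym2 V)) (y : V → ℝ) (c : Sym2 V → ℝ)
    (hfeas : FeasSol G M y c) (habcd : PropsABCD G M y c)
    (K : Set V) (hK : IsCompOf G (geX G) K) (hnt : K.Nontrivial)
    (hexp : ∃ u ∈ K, Exposed M u) :
    1 ≤ ∑ e ∈ edgesIn G K, c e := by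
  classical
  obtain ⟨hM, hc0, hcov, heq⟩ := hfeas
  obtain ⟨ha, hbC, hbcard, _, hy3, _⟩ := habcd
  obtain ⟨u, huK, huexp⟩ := hexp
  have hynn : ∀ v, 0 ≤ y v := hcov.1
  have hedgeFin : ∀ {f : Sym2 V}, f ∈ G.edgeSet → f ∈ edgeFin G := by
    intro f hf; simp [edgeFin, hf]
  have hYge : ∀ f ∈ edgeFin G, (1 : ℝ) + c f ≤ Ysum y f := by
    intro f hf
    obtain ⟨a, b, rfl⟩ := sym2_exists_eq' f
    have hadj : G.Adj a b := G.mem_edgeSet.mp (by simpa [edgeFin] using hf)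
    simpa using hcov.2 a b hadj
  have key : ∀ {Q : Finset (Sym2 V)}, IsMatching G Q →
      ∑ f ∈ Q, ((1:ℝ) + c f) ≤ ∑ v ∈ cov Q, y v := by
    intro Q hQ
    rw [sum_cov y hQ]
    exact Finset.sum_le_sum (fun f hf => hYge f (hedgeFin (hQ.1 f hf)))
  have hcovM_le : ∑ v ∈ cov M, y v ≤ ∑ v, y v :=
    Finset.sum_le_sum_of_subset_of_nonneg (Finset.subset_univ _) (fun v _ _ => hynn v)
  have hMeq : ∑ v ∈ cov M, y v = ∑ v, y v := by
    refine le_antisymm hcovM_le ?_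
    calc ∑ v, y v = ∑ f ∈ M, ((1:ℝ) + c f) := heq.symm
    _ ≤ ∑ v ∈ cov M, y v := key hM
  have hyzero : ∀ v, Exposed M v → y v = 0 := by
    intro v hv
    have hnc : v ∉ cov M := by
      rw [mem_cov]; rintro ⟨g, hg, hvg⟩; exact hv g hg hvg
    have hz : ∑ x ∈ Finset.univ \ cov M, y x = 0 := by
      have hs := Finset.sum_sdiff (f := y) (Finset.subset_univ (cov M))
      rw [hMeq] at hs
      linarith
    exact (Finset.sum_eq_zero_iff_of_nonneg (fun i _ => hynn i)).mp hz v
      (Finset.mem_sdiff.mpr ⟨Finset.mem_univ v, hnc⟩)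
  have hyu : y u = 0 := hyzero u huexp
  -- find a neighbour w of u inside K
  obtain ⟨x1, hx1, x2, hx2, hx12⟩ := hnt
  have hvex : ∃ v ∈ K, v ≠ u := by
    by_cases h : x1 = u
    · exact ⟨x2, hx2, fun h2 => hx12 (h.trans h2.symm)⟩
    · exact ⟨x1, hx1, h⟩
  obtain ⟨v0, hv0K, hv0⟩ := hvex
  obtain ⟨w, hwK, huw⟩ := exists_adj_of_connected hK.2.1 huK hv0K (fun h => hv0 h.symm)
  have huwE : s(u, w) ∈ edgeFin G := hedgeFin (G.mem_edgeSet.mpr huw)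
  have hyw : y w = 1 := by
    have h1 : (1:ℝ) + c s(u,w) ≤ y u + y w := hcov.2 u w huw
    have h2 : 0 ≤ c s(u,w) := hc0 _ huwE
    rcases hy3 w with h | h | h
    · rw [hyu, h] at h1; linarith
    · rw [hyu, h] at h1; linarith
    · exact h
  -- choose a maximum matching N exposing w maximizing |N ∩ M|
  obtain ⟨N₀, hN₀max, hN₀exp⟩ : Inessential G w := hK.1 hwK
  have hN₀card : N₀.card = nu G := by
    refine le_antisymm (card_le_nu' hN₀max.1) ?_
    rw [← hbcard]
    exact hN₀max.2 M hM
  set T : Finset (Finset (Sym2 V)) :=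
    Finset.univ.filter (fun Q => IsMatching G Q ∧ Q.card = nu G ∧ ∀ g ∈ Q, w ∉ g) with hT
  have hTmem : ∀ {Q}, Q ∈ T ↔ (IsMatching G Q ∧ Q.card = nu G ∧ ∀ g ∈ Q, w ∉ g) := by
    intro Q; simp [hT]
  obtain ⟨N, hNT, hNmax⟩ := T.exists_max_image (fun Q => (Q ∩ M).card)
    ⟨N₀, hTmem.mpr ⟨hN₀max.1, hN₀card, hN₀exp⟩⟩
  obtain ⟨hN, hNcard, hwexpN⟩ := hTmem.mp hNT
  set MDN : Finset (Sym2 V) := (M \ N) ∪ (N \ M) with hMDNdef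
  have hMDNmem : ∀ {g : Sym2 V}, g ∈ MDN ↔ ((g ∈ M ∧ g ∉ N) ∨ (g ∈ N ∧ g ∉ M)) := by
    intro g; simp [hMDNdef, Finset.mem_union, Finset.mem_sdiff]
  -- claim 2: every edge of M \ N lies inside K
  have claim2 : ∀ e ∈ M \ N, ∀ v ∈ e, v ∈ K := by
    intro e he
    obtain ⟨heM, heN⟩ := Finset.mem_sdiff.mp he
    obtain ⟨a, b, rfl⟩ := sym2_exists_eq' e
    have heMDN : s(a,b) ∈ MDN := hMDNmem.mpr (Or.inl ⟨heM, heN⟩)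
    have hreach : Reach MDN w a := by
      by_contra hnr
      set U : Set V := {x | Reach MDN a x} with hU
      have hUcl : ∀ p q : V, p ∈ U → s(p, q) ∈ MDN → q ∈ U :=
        fun p q hp hpq => reach_tail hp hpq
      set D : Finset (Sym2 V) := MDN.filter (fun f => ∃ v ∈ f, v ∈ U) with hDdef
      have hD : ∀ f, f ∈ D ↔ (((f ∈ M ∧ f ∉ N) ∨ (f ∈ N ∧ f ∉ M)) ∧ ∃ v ∈ f, v ∈ U) := by
        intro f
        rw [hDdef, Finset.mem_filter]
        constructor
        · rintro ⟨h1, h2⟩; exact ⟨hMDNmem.mp h1, h2⟩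
        · rintro ⟨h1, h2⟩; exact ⟨hMDNmem.mpr h1, h2⟩
      have hD' : ∀ f, f ∈ D ↔ (((f ∈ N ∧ f ∉ M) ∨ (f ∈ M ∧ f ∉ N)) ∧ ∃ v ∈ f, v ∈ U) := by
        intro f; rw [hD f]; tauto
      have hUcl' : ∀ p q : V, p ∈ U →
          ((s(p,q) ∈ M ∧ s(p,q) ∉ N) ∨ (s(p,q) ∈ N ∧ s(p,q) ∉ M)) → q ∈ U :=
        fun p q hp hside => hUcl p q hp (hMDNmem.mpr hside)
      have hUcl'' : ∀ p q : V, p ∈ U →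
          ((s(p,q) ∈ N ∧ s(p,q) ∉ M) ∨ (s(p,q) ∈ M ∧ s(p,q) ∉ N)) → q ∈ U :=
        fun p q hp hside => hUcl' p q hp hside.symm
      have hfullD : ∀ f ∈ D, ∀ v ∈ f, v ∈ U := fullU hD hUcl'
      have hN' : IsMatching G ((N \ D) ∪ (M ∩ D)) := flip' hN hM U hD' hUcl''
      have hM' : IsMatching G ((M \ D) ∪ (N ∩ D)) := flip' hM hN U hD hUcl'
      have hdisj1 : Disjoint (N \ D) (M ∩ D) := by
        rw [Finset.disjoint_left]
        intro f h1 h2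
        exact (Finset.mem_sdiff.mp h1).2 (Finset.mem_inter.mp h2).2
      have hdisj2 : Disjoint (M \ D) (N ∩ D) := by
        rw [Finset.disjoint_left]
        intro f h1 h2
        exact (Finset.mem_sdiff.mp h1).2 (Finset.mem_inter.mp h2).2
      have hcN' : ((N \ D) ∪ (M ∩ D)).card = (N.card - (N ∩ D).card) + (M ∩ D).card := by
        rw [Finset.card_union_of_disjoint hdisj1]
        have hc := Finset.card_sdiff_add_card_inter N D
        omega
      have hcM' : ((M \ D) ∪ (N ∩ D)).card = (M.card - (M ∩ D).card) + (N ∩ D).card := by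
        rw [Finset.card_union_of_disjoint hdisj2]
        have hc := Finset.card_sdiff_add_card_inter M D
        omega
      have hle1 : ((N \ D) ∪ (M ∩ D)).card ≤ nu G := card_le_nu' hN'
      have hle2 : ((M \ D) ∪ (N ∩ D)).card ≤ nu G := card_le_nu' hM'
      have hqN : (N ∩ D).card ≤ N.card := Finset.card_le_card Finset.inter_subset_left
      have hqM : (M ∩ D).card ≤ M.card := Finset.card_le_card Finset.inter_subset_left
      have hcardN' : ((N \ D) ∪ (M ∩ D)).card = nu G := by omega
      have hwexp' : ∀ g ∈ (N \ D) ∪ (M ∩ D), w ∉ g := by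
        intro g hg hwg
        rcases Finset.mem_union.mp hg with h | h
        · exact hwexpN g (Finset.mem_sdiff.mp h).1 hwg
        · have hgD := (Finset.mem_inter.mp h).2
          have hwU : w ∈ U := hfullD g hgD w hwg
          exact hnr (reach_symm hwU)
      have hNT' : ((N \ D) ∪ (M ∩ D)) ∈ T := hTmem.mpr ⟨hN', hcardN', hwexp'⟩
      have habD : s(a,b) ∈ D :=
        (hD _).mpr ⟨Or.inl ⟨heM, heN⟩, a, by simp, reach_refl a⟩
      have hmono : insert s(a,b) (N ∩ M) ⊆ ((N \ D) ∪ (M ∩ D)) ∩ M := by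
        intro f hf
        rcases Finset.mem_insert.mp hf with rfl | hf'
        · exact Finset.mem_inter.mpr
            ⟨Finset.mem_union_right _ (Finset.mem_inter.mpr ⟨heM, habD⟩), heM⟩
        · obtain ⟨hfN, hfM⟩ := Finset.mem_inter.mp hf'
          have hfnD : f ∉ D := by
            intro hfD
            rcases ((hD f).mp hfD).1 with ⟨_, h2⟩ | ⟨_, h2⟩
            · exact h2 hfN
            · exact h2 hfM
          exact Finset.mem_inter.mpr
            ⟨Finset.mem_union_left _ (Finset.mem_sdiff.mpr ⟨hfN, hfnD⟩), hfM⟩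
      have habNM : s(a,b) ∉ N ∩ M := fun h => heN (Finset.mem_inter.mp h).1
      have hgt : (N ∩ M).card < ((((N \ D) ∪ (M ∩ D)) ∩ M)).card := by
        have hins : (insert s(a,b) (N ∩ M)).card = (N ∩ M).card + 1 :=
          Finset.card_insert_of_notMem habNM
        have hle := Finset.card_le_card hmono
        omega
      have := hNmax _ hNT'
      omega
    have hcl := hK.2.2
    have haK : a ∈ K := claim1 hM hbcard hN hNcard huexp huw hwK hcl hwexpN hreach
    have hbK : b ∈ K := claim1 hM hbcard hN hNcard huexp huw hwK hcl hwexpN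
      (reach_tail hreach heMDN)
    intro v hv
    rcases Sym2.mem_iff.mp hv with rfl | rfl
    · exact haK
    · exact hbK
  -- final computation
  have hNle : ∑ f ∈ N, ((1:ℝ) + c f) ≤ ∑ v ∈ cov N, y v := key hN
  have hwnc : w ∉ cov N := by
    rw [mem_cov]; rintro ⟨g, hg, hwg⟩; exact hwexpN g hg hwg
  have hcovN_le : ∑ v ∈ cov N, y v ≤ (∑ v, y v) - 1 := by
    have hsub : cov N ⊆ Finset.univ.erase w := by
      intro v hv
      exact Finset.mem_erase.mpr ⟨fun h => hwnc (h ▸ hv), Finset.mem_univ v⟩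
    have h1 : ∑ v ∈ cov N, y v ≤ ∑ v ∈ Finset.univ.erase w, y v :=
      Finset.sum_le_sum_of_subset_of_nonneg hsub (fun v _ _ => hynn v)
    rw [Finset.sum_erase_eq_sub (Finset.mem_univ w), hyw] at h1
    exact h1
  have hsN : ∑ f ∈ N, ((1:ℝ) + c f) = (N.card : ℝ) + ∑ f ∈ N, c f := by
    rw [Finset.sum_add_distrib]; simp
  have hsM : ∑ f ∈ M, ((1:ℝ) + c f) = (M.card : ℝ) + ∑ f ∈ M, c f := by
    rw [Finset.sum_add_distrib]; simp
  have hcNsplit : ∑ f ∈ N, c f = ∑ f ∈ N ∩ M, c f := by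
    have hzero : ∑ f ∈ N \ (N ∩ M), c f = 0 := by
      apply Finset.sum_eq_zero
      intro f hf
      obtain ⟨hfN, hfnm⟩ := Finset.mem_sdiff.mp hf
      have hfnM : f ∉ M := fun h => hfnm (Finset.mem_inter.mpr ⟨hfN, h⟩)
      exact ha f (hedgeFin (hN.1 f hfN)) hfnM
    have hs := Finset.sum_sdiff (f := c) (Finset.inter_subset_left (s₁ := N) (s₂ := M))
    rw [hzero] at hs
    linarith
  have hcMsplit : ∑ f ∈ M \ N, c f + ∑ f ∈ N ∩ M, c f = ∑ f ∈ M, c f := by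
    have hs := Finset.sum_sdiff (f := c) (Finset.inter_subset_left (s₁ := M) (s₂ := N))
    rw [Finset.sdiff_inter_self_left, Finset.inter_comm M N] at hs
    exact hs
  have hcards : (N.card : ℝ) = (M.card : ℝ) := by rw [hNcard, hbcard]
  have h0 : ∑ v, y v = (M.card : ℝ) + ∑ f ∈ M, c f := by rw [← heq, hsM]
  have hfinal : (1:ℝ) ≤ ∑ f ∈ M \ N, c f := by linarith
  have hsubK : M \ N ⊆ edgesIn G K := by
    intro f hf
    have hfM := (Finset.mem_sdiff.mp hf).1
    refine Finset.mem_filter.mpr ⟨Finset.mem_univ f, hM.1 f hfM, ?_⟩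
    exact claim2 f hf
  calc (1:ℝ) ≤ ∑ f ∈ M \ N, c f := hfinal
  _ ≤ ∑ f ∈ edgesIn G K, c f := by
    apply Finset.sum_le_sum_of_subset_of_nonneg hsubK
    intro f hf _
    exact hc0 f (hedgeFin (Finset.mem_filter.mp hf).2.1)


end Stab
end
end
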